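/- If E1*B1 + E2*B2 + E3*B3 ≠ 0, then the 4×4 skew-symmetric matrix F = !![0, -B3, B2, -E1; B3, 0, -B1, -E2; -B2, B1, 0, -E3; E1, E2, E3, 0] is invertible, and its inverse equals (1/(E1*B1+E2*B2+E3*B3)) • !![0, E3, -E2, B1; -E3, 0, E1, B2; E2, -E1, 0, B3; -B1, -B2, -B3, 0]. -/

import Mathlib

theorem skew_four_inverse (E1 E2 E3 B1 B2 B3 : ℝ)
    (h : E1 * B1 + E2 * B2 + E3 * B3 ≠ 0) :
    IsUnit (!![0, -B3, B2, -E1; B3, 0, -B1, -E2; -B2, B1, 0, -E3; E1, E2, E3, 0] : Matrix (Fin 4) (Fin 4) ℝ) ∧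
    (!![0, -B3, B2, -E1; B3, 0, -B1, -E2; -B2, B1, 0, -E3; E1, E2, E3, 0] : Matrix (Fin 4) (Fin 4) ℝ)⁻¹ =
      (1 / (E1 * B1 + E2 * B2 + E3 * B3)) •
        !![0, E3, -E2, B1; -E3, 0, E1, B2; E2, -E1, 0, B3; -B1, -B2, -B3, 0] := by
  have hmul : (!![0, -B3, B2, -E1; B3, 0, -B1, -E2; -B2, B1, 0, -E3; E1, E2, E3, 0] : Matrix (Fin 4) (Fin 4) ℝ) *
      ((1 / (E1 * B1 + E2 * B2 + E3 * B3)) •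
        !![0, E3, -E2, B1; -E3, 0, E1, B2; E2, -E1, 0, B3; -B1, -B2, -B3, 0]) = 1 := by
    generalize hd : E1 * B1 + E2 * B2 + E3 * B3 = d at h
    ext i j
    fin_cases i <;> fin_cases j <;>
      simp [Matrix.mul_apply, Fin.sum_univ_succ, Matrix.one_apply] <;>
      field_simp <;> linarith
  exact ⟨(Matrix.isUnit_iff_isUnit_det _).2 (Matrix.isUnit_det_of_right_inverse hmul), Matrix.inv_eq_right_inv hmul⟩
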